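/- arXiv:math/9507204 — 3 statements merged into one kernel-verified Lean document; each statement's English description precedes it below -/
import Mathlib

section
/- The Fibonacci group F(2,3) = ⟨a₁, a₂, a₃ | a₁a₂ = a₃, a₂a₃ = a₁, a₃a₁ = a₂⟩ is isomorphic to the quaternion group of order 8. -/
/-- Relations of the Fibonacci group F(2,n): aᵢ a_{i+1} = a_{i+2}, indices mod n. -/
def fibRels (n : ℕ) [NeZero n] : Set (FreeGroup (Fin n)) :=
  {r | ∃ i : Fin n, r = FreeGroup.of i * FreeGroup.of (i + 1) * (FreeGroup.of (i + 2))⁻¹}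

/-- The Fibonacci group F(2,n). -/
abbrev Fib (n : ℕ) [NeZero n] := PresentedGroup (fibRels n)

namespace Fib3

open QuaternionGroup

def X : Fib 3 := PresentedGroup.of 0
def Y : Fib 3 := PresentedGroup.of 1
def Z : Fib 3 := PresentedGroup.of 2

lemma rel (i : Fin 3) :
    (PresentedGroup.of i : Fib 3) * PresentedGroup.of (i+1) = PresentedGroup.of (i+2) := by
  have h : (FreeGroup.of i * FreeGroup.of (i+1) * (FreeGroup.of (i+2))⁻¹)
      ∈ Subgroup.normalClosure (fibRels 3) :=
    Subgroup.subset_normalClosure ⟨i, rfl⟩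
  have h2 : (PresentedGroup.mk (fibRels 3))
      (FreeGroup.of i * FreeGroup.of (i+1) * (FreeGroup.of (i+2))⁻¹) = 1 :=
    (QuotientGroup.eq_one_iff _).mpr h
  rw [map_mul, map_mul, map_inv] at h2
  have := mul_eq_one_iff_eq_inv.mp h2
  simpa [PresentedGroup.of, inv_inv] using this

lemma rXY : X * Y = Z := by have := rel 0; simpa [X, Y, Z] using this
lemma rYZ : Y * Z = X := by have := rel 1; simpa [X, Y, Z] using this
lemma rZX : Z * X = Y := by have := rel 2; simpa [X, Y, Z] using this

lemma hxyx : X * Y * X = Y := by rw [rXY, rZX]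
lemma hyxy : Y * (X * Y) = X := by rw [rXY, rYZ]

lemma h1 : X * Y = Y * X⁻¹ := by
  have := congrArg (· * X⁻¹) hxyx
  simpa [mul_assoc] using this

lemma h2 : Y * Y = X * X := by
  have := hyxy
  rw [h1] at this
  have := congrArg (· * X) this
  simpa [mul_assoc] using this

lemma h4 : X ^ 4 = 1 := by
  have hx2 : X⁻¹ * X⁻¹ = Y⁻¹ * Y⁻¹ := by
    have := congrArg (·⁻¹) h2
    simpa [mul_inv_rev] using this.symm
  calc X^4 = (X*X)*(X*X) := by rw [pow_succ, pow_succ, pow_succ, pow_one, mul_assoc (X*X)]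
    _ = (X*X)*(Y*Y) := by rw [← h2]
    _ = X*(X*Y)*Y := by group
    _ = X*(Y*X⁻¹)*Y := by rw [h1]
    _ = (X*Y)*(X⁻¹*Y) := by group
    _ = (Y*X⁻¹)*(X⁻¹*Y) := by rw [h1]
    _ = Y*(X⁻¹*X⁻¹)*Y := by group
    _ = Y*(Y⁻¹*Y⁻¹)*Y := by rw [hx2]
    _ = 1 := by group

lemma hXinv : X⁻¹ = X ^ 3 := by
  have h : X ^ 3 * X = 1 := by rw [← pow_succ, h4]
  exact inv_eq_of_mul_eq_one_left h

lemma hXY3 : X * Y = Y * X ^ 3 := by rw [h1, hXinv]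

lemma hcomm : ∀ k : ℕ, X ^ k * Y = Y * X ^ (3 * k) := by
  intro k
  induction k with
  | zero => simp
  | succ k ih =>
    rw [pow_succ, mul_assoc, hXY3, ← mul_assoc, ih, mul_assoc, ← pow_add]
    ring_nf

/-- powers of X only depend on exponent mod 4 -/
lemma key (k : ℕ) (i : ZMod 4) (h : (k : ZMod 4) = i) : X ^ k = X ^ i.val := by
  have hmod : k % 4 = i.val % 4 := by
    have : (k : ZMod 4) = (i.val : ZMod 4) := by
      rw [h]; simp [ZMod.natCast_val, ZMod.cast_id]
    exact (ZMod.natCast_eq_natCast_iff k i.val 4).mp this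
  rw [pow_eq_pow_mod k h4, pow_eq_pow_mod i.val h4, hmod]

lemma hc4 : ((4 : ZMod 4)) = 0 := rfl

/-- the inverse map Q₈ → Fib 3 -/
def invFun : QuaternionGroup 2 → Fib 3
  | .a i => X ^ i.val
  | .xa i => Y * X ^ i.val

lemma invFun_mul (p q : QuaternionGroup 2) : invFun (p * q) = invFun p * invFun q := by
  cases p with
  | a i =>
    cases q with
    | a j =>
      show X ^ (i + j).val = X ^ i.val * X ^ j.val
      rw [← pow_add]
      exact (key _ _ (by push_cast; simp [ZMod.natCast_val, ZMod.cast_id])).symm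
    | xa j =>
      show Y * X ^ (j - i).val = X ^ i.val * (Y * X ^ j.val)
      rw [← mul_assoc, hcomm, mul_assoc, ← pow_add]
      congr 1
      refine (key _ _ ?_).symm
      push_cast
      simp only [ZMod.natCast_val, ZMod.cast_id]
      linear_combination (i : ZMod 4) * hc4
  | xa i =>
    cases q with
    | a j =>
      show Y * X ^ (i + j).val = (Y * X ^ i.val) * X ^ j.val
      rw [mul_assoc, ← pow_add]
      congr 1
      exact (key _ _ (by push_cast; simp [ZMod.natCast_val, ZMod.cast_id])).symm
    | xa j =>
      show X ^ ((2 : ZMod 4) + j - i).val = (Y * X ^ i.val) * (Y * X ^ j.val)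
      rw [mul_assoc, ← mul_assoc (X ^ i.val), hcomm, ← mul_assoc, ← mul_assoc, h2,
        mul_assoc (X*X), ← pow_add]
      have : X * X = X ^ 2 := by rw [pow_two]
      rw [this, ← pow_add]
      refine (key _ _ ?_).symm
      push_cast
      simp only [ZMod.natCast_val, ZMod.cast_id]
      linear_combination (i : ZMod 4) * hc4

def ψ : QuaternionGroup 2 →* Fib 3 where
  toFun := invFun
  map_one' := by
    show invFun (QuaternionGroup.a 0) = 1
    show X ^ (0 : ZMod 4).val = 1
    simp
  map_mul' := invFun_mul

def gens : Fin 3 → QuaternionGroup 2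
  | 0 => .a 1
  | 1 => .xa 0
  | 2 => .xa 3

lemma gens_rels : ∀ r ∈ fibRels 3, FreeGroup.lift gens r = 1 := by
  rintro r ⟨i, rfl⟩
  fin_cases i <;> simp [map_mul, map_inv, gens] <;> decide

def φ : Fib 3 →* QuaternionGroup 2 := PresentedGroup.toGroup gens_rels

lemma hZ : Y * X ^ 3 = Z := by rw [← hXY3, rXY]

lemma left : ψ.comp φ = MonoidHom.id (Fib 3) := by
  apply PresentedGroup.ext
  intro x
  rw [MonoidHom.comp_apply, MonoidHom.id_apply]
  fin_cases x
  · show ψ (φ X) = X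
    rw [show φ X = gens 0 from PresentedGroup.toGroup.of gens_rels]
    show X ^ (1 : ZMod 4).val = X
    rw [show (1 : ZMod 4).val = 1 from rfl, pow_one]
  · show ψ (φ Y) = Y
    rw [show φ Y = gens 1 from PresentedGroup.toGroup.of gens_rels]
    show Y * X ^ (0 : ZMod 4).val = Y
    rw [show (0 : ZMod 4).val = 0 from rfl, pow_zero, mul_one]
  · show ψ (φ Z) = Z
    rw [show φ Z = gens 2 from PresentedGroup.toGroup.of gens_rels]
    show Y * X ^ (3 : ZMod 4).val = Z
    exact hZ

lemma right : φ.comp ψ = MonoidHom.id (QuaternionGroup 2) := by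
  ext q
  cases q with
  | a i =>
    show φ (X ^ i.val) = QuaternionGroup.a i
    rw [map_pow]
    have : φ X = QuaternionGroup.a 1 := PresentedGroup.toGroup.of gens_rels
    rw [this, a_one_pow]
    congr 1
    simp [ZMod.natCast_val, ZMod.cast_id]
  | xa i =>
    show φ (Y * X ^ i.val) = QuaternionGroup.xa i
    rw [map_mul, map_pow]
    have hy : φ Y = QuaternionGroup.xa 0 := PresentedGroup.toGroup.of gens_rels
    have hx : φ X = QuaternionGroup.a 1 := PresentedGroup.toGroup.of gens_rels
    rw [hy, hx, a_one_pow, xa_mul_a]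
    congr 1
    simp [ZMod.natCast_val, ZMod.cast_id]

end Fib3

/-- F(2,3) is isomorphic to the quaternion group Q₈ of order 8. -/
theorem fib3_iso_quaternion : Nonempty (Fib 3 ≃* QuaternionGroup 2) :=
  ⟨MonoidHom.toMulEquiv Fib3.φ Fib3.ψ Fib3.left Fib3.right⟩
end

section
/- The Fibonacci group F(2,4) = ⟨a₁, a₂, a₃, a₄ | a₁a₂ = a₃, a₂a₃ = a₄, a₃a₄ = a₁, a₄a₁ = a₂⟩ is isomorphic to the cyclic group of order 5. -/
/-!
Substituting a₃ = a₁a₂ and a₄ = a₂a₃ into a₄a₁ = a₂ gives a₁a₂a₁ = 1, so every generator is a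
power of a₁: a₂ = a₁⁻², a₃ = a₁⁻¹, a₄ = a₁⁻³, and then a₃a₄ = a₁ becomes a₁⁵ = 1. Thus F(2,4)
is cyclic, generated by an element of order dividing 5, and a₁ ≠ 1 because (a₁, a₂, a₃, a₄) ↦
(1, 3, 4, 2) respects the relations in ℤ/5. Hence F(2,4) has prime order 5.

The generator aᵢ is `of (i - 1)`, indices starting at 0.
-/

namespace Fib

open PresentedGroup Subgroup

variable {n : ℕ} [NeZero n]

theorem of_mul_of_add_one (i : Fin n) :
    (of i : Fib n) * of (i + 1) = of (i + 2) :=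
  mk_eq_mk_of_mul_inv_mem ⟨i, rfl⟩

def lift {G : Type*} [Group G] (x : Fin n → G) (hx : ∀ i, x i * x (i + 1) = x (i + 2)) :
    Fib n →* G :=
  toGroup (f := x) (by rintro _ ⟨i, rfl⟩; simp [hx])

theorem lift_of {G : Type*} [Group G] (x : Fin n → G) (hx : ∀ i, x i * x (i + 1) = x (i + 2))
    (i : Fin n) : lift x hx (of i) = x i :=
  toGroup.of _

local notation "a" => (of : Fin 4 → Fib 4)

theorem four_of_zero_mul_of_one_mul_of_zero : a 0 * a 1 * a 0 = 1 := by
  have r0 : a 0 * a 1 = a 2 := of_mul_of_add_one 0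
  have r1 : a 1 * a 2 = a 3 := of_mul_of_add_one 1
  have r3 : a 3 * a 0 = a 1 := of_mul_of_add_one 3
  exact mul_left_cancel <|
    calc a 1 * (a 0 * a 1 * a 0) = a 1 * (a 0 * a 1) * a 0 := by group
      _ = a 1 * 1 := by rw [r0, r1, r3, mul_one]

theorem four_of_one : a 1 = (a 0 ^ 2)⁻¹ :=
  calc a 1 = (a 0)⁻¹ * (a 0 * a 1 * a 0) * (a 0)⁻¹ := by group
    _ = (a 0 ^ 2)⁻¹ := by rw [four_of_zero_mul_of_one_mul_of_zero]; group

theorem four_of_two : a 2 = (a 0)⁻¹ := by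
  have r0 : a 0 * a 1 = a 2 := of_mul_of_add_one 0
  rw [← r0, four_of_one]; group

theorem four_of_three : a 3 = (a 0 ^ 3)⁻¹ := by
  have r1 : a 1 * a 2 = a 3 := of_mul_of_add_one 1
  rw [← r1, four_of_one, four_of_two]; group

theorem four_of_zero_pow_five : a 0 ^ 5 = 1 := by
  have r2 : a 2 * a 3 = a 0 := of_mul_of_add_one 2
  calc a 0 ^ 5 = a 0 ^ 4 * (a 2 * a 3) := by rw [r2]; group
    _ = 1 := by rw [four_of_two, four_of_three]; group

theorem four_mem_zpowers_of_zero (x : Fib 4) : x ∈ zpowers (a 0) := by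
  refine generated_by _ _ (fun i => ?_) x
  have ha := mem_zpowers (a 0)
  fin_cases i
  · exact ha
  · simp [four_of_one, pow_mem ha 2]
  · simp [four_of_two, ha]
  · simp [four_of_three, pow_mem ha 3]

def fourToZMod : Fib 4 →* Multiplicative (ZMod 5) :=
  lift (fun i => Multiplicative.ofAdd (![1, 3, 4, 2] i)) (by decide)

theorem four_of_zero_ne_one : a 0 ≠ 1 := by
  intro h
  have := congrArg fourToZMod h
  rw [fourToZMod, lift_of, map_one] at this
  exact absurd this (by decide)

theorem card_four : Nat.card (Fib 4) = 5 :=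
  have : Fact (Nat.Prime 5) := ⟨Nat.prime_five⟩
  (orderOf_eq_card_of_forall_mem_zpowers four_mem_zpowers_of_zero).symm.trans
    (orderOf_eq_prime four_of_zero_pow_five four_of_zero_ne_one)

end Fib

/-- F(2,4) is isomorphic to the cyclic group of order 5. -/
theorem fib4_iso_cyclic5 : Nonempty (Fib 4 ≃* Multiplicative (ZMod 5)) :=
  have : Fact (Nat.Prime 5) := ⟨Nat.prime_five⟩
  ⟨mulEquivOfPrimeCardEq Fib.card_four (Nat.card_zmod 5)⟩
end

section
/- The Fibonacci group F(2,5) is a finite group of order 11. -/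
lemma fib_rel (i : Fin 5) :
    (PresentedGroup.of i : Fib 5) * PresentedGroup.of (i+1) = PresentedGroup.of (i+2) := by
  have h : (PresentedGroup.mk (fibRels 5)
      (FreeGroup.of i * FreeGroup.of (i + 1) * (FreeGroup.of (i + 2))⁻¹)) = 1 := by
    apply (QuotientGroup.eq_one_iff _).mpr
    exact Subgroup.subset_normalClosure ⟨i, rfl⟩
  rw [map_mul, map_mul, map_inv] at h
  exact mul_inv_eq_one.mp h

namespace Fib5
notation "x" => (PresentedGroup.of (0:Fin 5) : Fib 5)
notation "y" => (PresentedGroup.of (1:Fin 5) : Fib 5)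

lemma r0 : x * y = PresentedGroup.of 2 := by have := fib_rel 0; norm_num at this ⊢; exact this
lemma r1 : y * PresentedGroup.of 2 = PresentedGroup.of 3 := by
  have := fib_rel 1; norm_num at this ⊢; exact this
lemma r2 : (PresentedGroup.of 2 : Fib 5) * PresentedGroup.of 3 = PresentedGroup.of 4 := by
  have := fib_rel 2; norm_num at this ⊢; exact this
lemma r3 : (PresentedGroup.of 3 : Fib 5) * PresentedGroup.of 4 = x := by
  have := fib_rel 3; norm_num at this ⊢; exact this
lemma r4 : (PresentedGroup.of 4 : Fib 5) * x = y := by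
  have := fib_rel 4; norm_num at this ⊢; exact this

lemma h3 : (PresentedGroup.of 3 : Fib 5) = y*x*y := by
  rw [← r1, ← r0]; group
lemma h4 : (PresentedGroup.of 4 : Fib 5) = x*y*y*x*y := by
  rw [← r2, ← r0, h3]; group

lemma A : y*x*y*x*y*y*x*y = x := by
  have h := r3; rw [h3, h4] at h
  calc y*x*y*x*y*y*x*y = (y*x*y)*(x*y*y*x*y) := by group
    _ = x := h

lemma B : x*y*y*x*y*x = y := by
  have h := r4; rw [h4] at h
  calc x*y*y*x*y*x = (x*y*y*x*y)*x := by group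
    _ = y := h

lemma B' : x*y*y*x*y = y*x⁻¹ := by
  calc x*y*y*x*y = x*y*y*x*y*x*x⁻¹ := by group
    _ = y*x⁻¹ := by rw [B]

lemma C : y*x*y*y = x*x := by
  calc y*x*y*y = y*x*y*x*y*y*x*y*((x*y*y*x*y)⁻¹*y) := by group
    _ = x*((x*y*y*x*y)⁻¹*y) := by rw [A]
    _ = x*((y*x⁻¹)⁻¹*y) := by rw [B']
    _ = x*x := by group

lemma C2 : x*y*y = y⁻¹*x*x := by
  calc x*y*y = y⁻¹*(y*x*y*y) := by group
    _ = y⁻¹*(x*x) := by rw [C]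
    _ = y⁻¹*x*x := by group

lemma C3 : y*y = x⁻¹*y⁻¹*x*x := by
  calc y*y = x⁻¹*y⁻¹*(y*x*y*y) := by group
    _ = x⁻¹*y⁻¹*(x*x) := by rw [C]
    _ = x⁻¹*y⁻¹*x*x := by group

lemma D : x*x*x*y*x = y*y := by
  calc x*x*x*y*x = y*(y⁻¹*x*x*(x*y*x)) := by group
    _ = y*(x*y*y*(x*y*x)) := by rw [← C2]
    _ = y*(x*y*y*x*y*x) := by group
    _ = y*y := by rw [B]

lemma E : y*x*x*x*x*y = x := by
  calc y*x*x*x*x*y = y*(x*(x*x*x*y*x)*x⁻¹) := by group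
    _ = y*(x*(y*y)*x⁻¹) := by rw [D]
    _ = y*(x*(x⁻¹*y⁻¹*x*x)*x⁻¹) := by rw [C3]
    _ = x := by group

lemma E2 : y*x*x*x*x = x*y⁻¹ := by
  calc y*x*x*x*x = (y*x*x*x*x*y)*y⁻¹ := by group
    _ = x*y⁻¹ := by rw [E]

lemma F1 : x*x*x*y*y*x*x*x*x = y := by
  calc x*x*x*y*y*x*x*x*x = x*x*x*y*(y*x*x*x*x*y)*y⁻¹ := by group
    _ = x*x*x*y*x*y⁻¹ := by rw [E]
    _ = y*y*y⁻¹ := by rw [D]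
    _ = y := by group


lemma F : y*x⁻¹*x⁻¹*y = x*x*x*x*x*x := by
  calc y*x⁻¹*x⁻¹*y
      = (y*x*y*y)*x*x*x*x*(x*x*x*y*y*x*x*x*x)⁻¹*y := by group
    _ = (x*x)*x*x*x*x*(x*x*x*y*y*x*x*x*x)⁻¹*y := by rw [C]
    _ = (x*x)*x*x*x*x*y⁻¹*y := by rw [F1]
    _ = x*x*x*x*x*x := by group

lemma G : y*x*x*x*x*x*x*y⁻¹ = x⁻¹*x⁻¹*x⁻¹*x⁻¹*x⁻¹ := by
  calc y*x*x*x*x*x*x*y⁻¹ = (y*x*x*x*x*y)*(y*x⁻¹*x⁻¹*y)⁻¹ := by group; simp only [zpow_neg, zpow_one, zpow_ofNat, pow_succ, pow_zero, one_mul, mul_assoc]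
    _ = x*(x*x*x*x*x*x)⁻¹ := by rw [E, F]
    _ = x⁻¹*x⁻¹*x⁻¹*x⁻¹*x⁻¹ := by group

lemma G2 : x*x*x*x*x*x = y⁻¹*(x⁻¹*x⁻¹*x⁻¹*x⁻¹*x⁻¹)*y := by
  calc x*x*x*x*x*x = y⁻¹*(y*x*x*x*x*x*x*y⁻¹)*y := by group
    _ = y⁻¹*(x⁻¹*x⁻¹*x⁻¹*x⁻¹*x⁻¹)*y := by rw [G]

lemma H : x*x = y*x⁻¹*x⁻¹*x⁻¹*x⁻¹*x⁻¹*x⁻¹*y := by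
  calc x*x = y*x⁻¹*(x*y⁻¹)*x*x := by group
    _ = y*x⁻¹*(y*x*x*x*x)*x*x := by rw [← E2]
    _ = y*x⁻¹*y*(x*x*x*x*x*x) := by group
    _ = y*x⁻¹*y*(y⁻¹*(x⁻¹*x⁻¹*x⁻¹*x⁻¹*x⁻¹)*y) := by rw [G2]
    _ = y*x⁻¹*x⁻¹*x⁻¹*x⁻¹*x⁻¹*x⁻¹*y := by group

lemma c4 : y*x*x*x*x*y⁻¹ = x*x*x*x := by
  calc y*x*x*x*x*y⁻¹ = (y*x⁻¹*x⁻¹*y)*(y*x⁻¹*x⁻¹*x⁻¹*x⁻¹*x⁻¹*x⁻¹*y)⁻¹ := by group; simp only [zpow_neg, zpow_one, zpow_ofNat, pow_succ, pow_zero, one_mul, mul_assoc]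
    _ = (x*x*x*x*x*x)*(x*x)⁻¹ := by rw [F, ← H]
    _ = x*x*x*x := by group; simp only [zpow_neg, zpow_one, zpow_ofNat, pow_succ, pow_zero, one_mul, mul_assoc]

lemma c4' : y*x*x*x*x = x*x*x*x*y := by
  calc y*x*x*x*x = (y*x*x*x*x*y⁻¹)*y := by group
    _ = x*x*x*x*y := by rw [c4]

lemma I : y*y = x⁻¹*x⁻¹*x⁻¹ := by
  calc y*y = x⁻¹*x⁻¹*x⁻¹*x⁻¹*((x*x*x*x*y)*y) := by group
    _ = x⁻¹*x⁻¹*x⁻¹*x⁻¹*((y*x*x*x*x)*y) := by rw [← c4']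
    _ = x⁻¹*x⁻¹*x⁻¹*x⁻¹*(y*x*x*x*x*y) := by group
    _ = x⁻¹*x⁻¹*x⁻¹*x⁻¹*x := by rw [E]
    _ = x⁻¹*x⁻¹*x⁻¹ := by group

lemma J : y = x*x*x*x := by
  calc y = (y*x*y*y)*(y*y)⁻¹*x⁻¹ := by group
    _ = (x*x)*(y*y)⁻¹*x⁻¹ := by rw [C]
    _ = (x*x)*(x⁻¹*x⁻¹*x⁻¹)⁻¹*x⁻¹ := by rw [I]
    _ = x*x*x*x := by group; simp only [zpow_neg, zpow_one, zpow_ofNat, pow_succ, pow_zero, one_mul, mul_assoc]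

lemma X11 : x^(11:ℕ) = 1 := by
  have h := I
  rw [J] at h
  calc x^(11:ℕ) = ((x*x*x*x)*(x*x*x*x))*(x⁻¹*x⁻¹*x⁻¹)⁻¹*(x⁻¹*x⁻¹*x⁻¹)*(x⁻¹*x⁻¹*x⁻¹)⁻¹ := by group
    _ = ((x*x*x*x)*(x*x*x*x))*((x*x*x*x)*(x*x*x*x))⁻¹*(x⁻¹*x⁻¹*x⁻¹)*(x⁻¹*x⁻¹*x⁻¹)⁻¹ := by
          rw [h]
    _ = 1 := by group



lemma top : ∀ g : Fib 5, g ∈ Subgroup.zpowers x := by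
  intro g
  apply PresentedGroup.generated_by
  intro j
  fin_cases j
  · exact Subgroup.mem_zpowers _
  · rw [show (⟨1,by norm_num⟩ : Fin 5) = 1 from rfl, J]
    exact Subgroup.mul_mem _ (Subgroup.mul_mem _ (Subgroup.mul_mem _ (Subgroup.mem_zpowers _)
      (Subgroup.mem_zpowers _)) (Subgroup.mem_zpowers _)) (Subgroup.mem_zpowers _)
  · rw [show (⟨2,by norm_num⟩ : Fin 5) = 2 from rfl, ← r0, J]
    repeat' first | exact Subgroup.mem_zpowers _ | apply Subgroup.mul_mem
  · rw [show (⟨3,by norm_num⟩ : Fin 5) = 3 from rfl, h3, J]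
    repeat' first | exact Subgroup.mem_zpowers _ | apply Subgroup.mul_mem
  · rw [show (⟨4,by norm_num⟩ : Fin 5) = 4 from rfl, h4, J]
    repeat' first | exact Subgroup.mem_zpowers _ | apply Subgroup.mul_mem

lemma surjFin : Function.Surjective (fun k : Fin 11 => x ^ (k : ℕ)) := by
  intro g
  obtain ⟨n, rfl⟩ := top g
  refine ⟨⟨(n % 11).toNat, ?_⟩, ?_⟩
  · have h1 : n % 11 < 11 := Int.emod_lt_of_pos n (by norm_num)
    omega
  · show x ^ ((n % 11).toNat : ℕ) = x ^ n
    have h0 : (0:ℤ) ≤ n % 11 := Int.emod_nonneg n (by norm_num)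
    rw [← zpow_natCast, Int.toNat_of_nonneg h0]
    conv_rhs => rw [← Int.emod_add_mul_ediv n 11]
    rw [zpow_add, zpow_mul, show ((11:ℤ) = ((11:ℕ):ℤ)) from rfl, zpow_natCast, X11,
      one_zpow, mul_one]

instance : Finite (Fib 5) := Finite.of_surjective _ surjFin

def v : Fin 5 → ZMod 11 := ![1, 4, 5, 9, 3]

lemma relsOk : ∀ r ∈ fibRels 5,
    FreeGroup.lift (fun i => Multiplicative.ofAdd (v i)) r = 1 := by
  rintro r ⟨i, rfl⟩
  simp only [map_mul, map_inv, FreeGroup.lift_apply_of]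
  fin_cases i <;> decide

def φ : Fib 5 →* Multiplicative (ZMod 11) := PresentedGroup.toGroup relsOk

lemma φsurj : Function.Surjective φ := by
  intro z
  refine ⟨x ^ (Multiplicative.toAdd z).val, ?_⟩
  rw [map_pow]
  have hx : φ x = Multiplicative.ofAdd (1 : ZMod 11) := PresentedGroup.toGroup.of relsOk
  rw [hx, ← ofAdd_nsmul]
  have : ((Multiplicative.toAdd z).val : ℕ) • (1 : ZMod 11) = Multiplicative.toAdd z := by
    rw [nsmul_eq_mul, mul_one]
    exact ZMod.natCast_rightInverse _
  rw [this, ofAdd_toAdd]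

end Fib5

/-- F(2,5) is a finite group of order 11. -/
theorem fib5_order_eleven : Finite (Fib 5) ∧ Nat.card (Fib 5) = 11 := by
  refine ⟨inferInstance, le_antisymm ?_ ?_⟩
  · have := Nat.card_le_card_of_surjective _ Fib5.surjFin
    simpa using this
  · have := Nat.card_le_card_of_surjective _ Fib5.φsurj
    have hc : Nat.card (Multiplicative (ZMod 11)) = 11 := by
      simp [Nat.card_eq_fintype_card]
    omega
end
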